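/- For an Eulerian poset P of rank d > 0, the polynomial B(P;u,v) satisfies B(P;u,1) = (1−u)^d and B(P;1,v) = 0. -/

import Mathlib

open Finset Polynomial
open scoped Classical

/-- The defining recursion of the Möbius function of a finite poset. -/
def MobiusRec {P : Type*} [PartialOrder P] [Fintype P] (mu : P → P → ℤ) : Prop :=
  (∀ x : P, mu x x = 1) ∧
    ∀ x y : P, x < y → (∑ z : P, if x ≤ z ∧ z ≤ y then mu x z else 0) = 0

/-- A finite poset with rank function `ρ` is Eulerian if its Möbius function satisfies
`μ(x,y) = (-1)^(ρ(y) - ρ(x))` for all `x ≤ y`. -/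
def IsEulerian {P : Type*} [PartialOrder P] [Fintype P] (ρ : P → ℕ) : Prop :=
  ∀ mu : P → P → ℤ, MobiusRec mu → ∀ x y : P, x ≤ y → mu x y = (-1 : ℤ) ^ (ρ y - ρ x)

/-- `ρ` is a rank function of rank `d`: `ρ(⊥) = 0`, `ρ(⊤) = d`, `ρ` is monotone and
increases by one along covering relations. -/
def IsRankFunction {P : Type*} [PartialOrder P] [BoundedOrder P] (ρ : P → ℕ) (d : ℕ) : Prop :=
  ρ ⊥ = 0 ∧ ρ ⊤ = d ∧ Monotone ρ ∧ ∀ x y : P, x ⋖ y → ρ y = ρ x + 1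

/-- The truncation operator `τ_{< d/2}`, keeping only the terms of degree `< d/2`
(that is, `2*i < d`). -/
noncomputable def truncLtHalf (d : ℕ) (p : Polynomial ℤ) : Polynomial ℤ :=
  ∑ i ∈ Finset.range (p.natDegree + 1),
    if 2 * i < d then Polynomial.C (p.coeff i) * Polynomial.X ^ i else 0

/-- Stanley's polynomials `G([x,y],t)` and `H([x,y],t)` of the intervals of a finite graded
poset `P` with rank function `ρ`, given by the recursion: `G = H = 1` on rank-0 intervals,
`H([x,y],t) = ∑_{x < z ≤ y} (t-1)^(ρ(z)-ρ(x)-1) G([z,y],t)`, and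
`G([x,y],t) = τ_{< (ρ(y)-ρ(x))/2} ((1-t) H([x,y],t))`. -/
def GHSystem {P : Type*} [PartialOrder P] [Fintype P] (ρ : P → ℕ)
    (G H : P → P → Polynomial ℤ) : Prop :=
  (∀ x : P, G x x = 1 ∧ H x x = 1) ∧
  (∀ x y : P, x < y →
      H x y = ∑ z : P,
        if x < z ∧ z ≤ y then (Polynomial.X - 1) ^ (ρ z - ρ x - 1) * G z y else 0) ∧
  (∀ x y : P, x < y → G x y = truncLtHalf (ρ y - ρ x) ((1 - Polynomial.X) * H x y))

/-- The field of rational functions in the two variables `u`, `v` over `ℤ`. -/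
noncomputable abbrev KK : Type := FractionRing (MvPolynomial (Fin 2) ℤ)

/-- The variable `u` in `KK`. -/
noncomputable def UU : KK := algebraMap (MvPolynomial (Fin 2) ℤ) KK (MvPolynomial.X 0)

/-- The variable `v` in `KK`. -/
noncomputable def VV : KK := algebraMap (MvPolynomial (Fin 2) ℤ) KK (MvPolynomial.X 1)

/-- Evaluation of a two-variable polynomial `b(u,v)` at a pair of elements of `KK`. -/
noncomputable def evB (b : MvPolynomial (Fin 2) ℤ) (u v : KK) : KK :=
  MvPolynomial.aeval ![u, v] b

/-- Evaluation of a one-variable polynomial at an element of `KK`. -/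
noncomputable def evP (p : Polynomial ℤ) (t : KK) : KK := Polynomial.aeval t p

/-- The defining recursion of the polynomials `B([x,y];u,v)` of the intervals of a finite
graded poset `P`: `B = 1` on rank-0 intervals and
`∑_{x ≤ z ≤ y} B([x,z];u,v) u^(ρ(y)-ρ(z)) G([z,y],u⁻¹v) = G([x,y],uv)`. -/
def BSystem {P : Type*} [PartialOrder P] [Fintype P] (ρ : P → ℕ)
    (G : P → P → Polynomial ℤ) (B : P → P → MvPolynomial (Fin 2) ℤ) : Prop :=
  (∀ x : P, B x x = 1) ∧
  ∀ x y : P, x < y →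
    (∑ z : P, if x ≤ z ∧ z ≤ y then
        evB (B x z) UU VV * UU ^ (ρ y - ρ z) * evP (G z y) (UU⁻¹ * VV) else 0)
      = evP (G x y) (UU * VV)

/-!
Clearing denominators turns the recursion defining `B` into the polynomial identity
`∑_{x ≤ z ≤ y} B([x,z];u,v) · u^(ρ y - ρ z) G([z,y], v/u) = G([x,y], uv)`, which can then
be specialized. At `u = 1` it reads `∑_z B([x,z];1,v) G([z,y],v) = G([x,y],v)`, a unitriangular
system in the unknowns `B([x,z];1,v)` whose solution is `δ_{xz}`. At `v = 1` it is again a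
unitriangular system, now in the unknowns `B([x,z];u,1)` with coefficients
`u^(ρ y - ρ z) G([z,y],1/u)`, and `(1-u)^(ρ z - ρ x)` solves it: by Stanley's symmetry for
Eulerian posets `u^k G([z,y],1/u) = ∑_{z ≤ w ≤ y} (u-1)^(ρ w - ρ z) G([w,y],u)`, and the
resulting double sum collapses by Möbius inversion, `μ(x,z) = (-1)^(ρ z - ρ x)`.
-/

namespace Polynomial

variable {R : Type*} [CommRing R]

lemma reflect_sum {ι : Type*} (s : Finset ι) (N : ℕ) (f : ι → R[X]) :
    (∑ i ∈ s, f i).reflect N = ∑ i ∈ s, (f i).reflect N := by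
  ext j
  simp only [coeff_reflect, finsetSum_coeff]

lemma natDegree_X_sub_one_pow_le (a : ℕ) : ((X - 1 : R[X]) ^ a).natDegree ≤ a := by
  simpa using natDegree_pow_le_of_le a (natDegree_X_sub_C_le (1 : R))

lemma reflect_X_sub_one_pow (a : ℕ) : ((X - 1 : R[X]) ^ a).reflect a = (1 - X) ^ a := by
  induction a with
  | zero => simp
  | succ a ih =>
    rw [pow_succ, reflect_mul _ _ (natDegree_X_sub_one_pow_le a)
      (by simpa using natDegree_X_sub_C_le (1 : R)), ih, reflect_sub, reflect_one_X,
      reflect_one, pow_one, pow_succ]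

lemma aeval_one_X_homogenize {p : R[X]} {n : ℕ} (hn : p.natDegree ≤ n) :
    MvPolynomial.aeval ![1, X] (p.homogenize n) = p.reflect n := by
  refine induction_with_natDegree_le
    (fun p => MvPolynomial.aeval ![1, X] (p.homogenize n) = p.reflect n) n (by simp)
    (fun m r _ hm => ?_) (fun f g _ _ hf hg => ?_) p hn
  · rw [reflect_C_mul_X_pow, revAt_le hm, homogenize_C_mul, homogenize_X_pow hm]
    simp [Polynomial.C_eq_algebraMap]
  · rw [homogenize_add, map_add, hf, hg, reflect_add]

lemma aeval_homogenize {K : Type*} [Field K] [Algebra R K] {p : R[X]} {n : ℕ}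
    (hn : p.natDegree ≤ n) (x : Fin 2 → K) (hx : x 1 ≠ 0) :
    MvPolynomial.aeval x (p.homogenize n) = aeval (x 0 / x 1) p * x 1 ^ n := by
  rw [MvPolynomial.aeval_def, ← MvPolynomial.eval_map, ← homogenize_map,
    eval_homogenize (natDegree_map_le.trans hn) x hx, eval_map_algebraMap]

end Polynomial

section TruncLtHalf

open Polynomial

lemma coeff_truncLtHalf (k : ℕ) (p : ℤ[X]) (j : ℕ) :
    (truncLtHalf k p).coeff j = if 2 * j < k then p.coeff j else 0 := by
  rw [truncLtHalf, finsetSum_coeff]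
  simp only [apply_ite (fun q : ℤ[X] => q.coeff j), coeff_C_mul_X_pow, coeff_zero]
  rw [Finset.sum_eq_single j (fun i _ hij => by simp [Ne.symm hij])]
  · simp
  · intro hj
    rw [Finset.mem_range, not_lt] at hj
    simp [coeff_eq_zero_of_natDegree_lt (Nat.lt_of_succ_le hj)]

lemma natDegree_truncLtHalf_le (k : ℕ) (p : ℤ[X]) : (truncLtHalf k p).natDegree ≤ k := by
  refine natDegree_le_iff_coeff_eq_zero.2 fun j hj => ?_
  rw [coeff_truncLtHalf, if_neg (by omega)]

lemma reflect_truncLtHalf {k : ℕ} {p : ℤ[X]} (hp : p.reflect k = -p) :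
    (truncLtHalf k p).reflect k = truncLtHalf k p - p := by
  have hanti : ∀ j, p.coeff (revAt k j) = -p.coeff j := fun j => by
    rw [← coeff_reflect, hp, coeff_neg]
  ext j
  rw [coeff_reflect, coeff_sub, coeff_truncLtHalf, coeff_truncLtHalf]
  rcases le_or_gt j k with hj | hj
  · have hpj := hanti j
    rw [revAt_le hj] at hpj ⊢
    rcases lt_trichotomy (2 * j) k with hlt | heq | hgt
    · rw [if_neg (by omega), if_pos hlt, sub_self]
    · rw [show k - j = j by omega] at hpj ⊢
      split_ifs <;> omega
    · rw [if_pos (by omega), if_neg (by omega), hpj, zero_sub]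
  · have hpj := hanti j
    rw [revAt_eq_self_of_lt hj] at hpj ⊢
    split_ifs <;> omega

end TruncLtHalf

lemma IsRankFunction.strictMono {P : Type*} [PartialOrder P] [BoundedOrder P] [Finite P]
    {ρ : P → ℕ} {d : ℕ} (hρ : IsRankFunction ρ d) : StrictMono ρ := fun x y hxy => by
  obtain ⟨m, hxm, hmy⟩ := exists_covBy_le_of_lt hxy
  have := hρ.2.2.2 x m hxm
  have := hρ.2.2.1 hmy
  omega

section IntervalSums

variable {P : Type*} [PartialOrder P] [Fintype P] [LocallyFiniteOrder P]

lemma sum_ite_le_and_le {M : Type*} [AddCommMonoid M] (x y : P) (f : P → M) :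
    (∑ z : P, if x ≤ z ∧ z ≤ y then f z else 0) = ∑ z ∈ Icc x y, f z := by
  rw [← sum_filter]
  congr 1
  ext z
  simp

lemma sum_ite_lt_and_le {M : Type*} [AddCommMonoid M] (x y : P) (f : P → M) :
    (∑ z : P, if x < z ∧ z ≤ y then f z else 0) = ∑ z ∈ Ioc x y, f z := by
  rw [← sum_filter]
  congr 1
  ext z
  simp

variable {ρ : P → ℕ}

lemma IsEulerian.sum_Icc_neg_one_pow {R : Type*} [Ring R] (hE : IsEulerian ρ) (x y : P) :
    ∑ z ∈ Icc x y, (-1 : R) ^ (ρ z - ρ x) = if x = y then 1 else 0 := by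
  have hmu : MobiusRec (fun a b : P => IncidenceAlgebra.mu ℤ a b) :=
    ⟨fun a => IncidenceAlgebra.mu_self a, fun a b hab => by
      rw [sum_ite_le_and_le, IncidenceAlgebra.sum_Icc_mu_right, if_neg hab.ne]⟩
  have hsum := IncidenceAlgebra.sum_Icc_mu_right (𝕜 := ℤ) x y
  rw [sum_congr rfl fun z hz => hE _ hmu x z (mem_Icc.1 hz).1] at hsum
  exact_mod_cast congrArg (Int.cast : ℤ → R) hsum

/-- Möbius inversion in an Eulerian poset, where `μ(x,z) = (-1)^(ρ z - ρ x)`. -/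
lemma IsEulerian.sum_Icc_neg_pow_mul_sum_Icc {R : Type*} [CommRing R] (hE : IsEulerian ρ)
    (hρ : Monotone ρ) (c : R) (f : P → R) {x y : P} (hxy : x ≤ y) :
    ∑ z ∈ Icc x y, (-c) ^ (ρ z - ρ x) * ∑ w ∈ Icc z y, c ^ (ρ w - ρ z) * f w = f x := by
  calc ∑ z ∈ Icc x y, (-c) ^ (ρ z - ρ x) * ∑ w ∈ Icc z y, c ^ (ρ w - ρ z) * f w
      = ∑ z ∈ Icc x y, ∑ w ∈ Icc z y, (-1) ^ (ρ z - ρ x) * (c ^ (ρ w - ρ x) * f w) := by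
        refine sum_congr rfl fun z hz => ?_
        rw [mul_sum]
        refine sum_congr rfl fun w hw => ?_
        have hzw : ρ w - ρ x = (ρ z - ρ x) + (ρ w - ρ z) := by
          have := hρ (mem_Icc.1 hz).1
          have := hρ (mem_Icc.1 hw).1
          omega
        rw [hzw, neg_pow, pow_add]
        ring
    _ = ∑ w ∈ Icc x y,
          (∑ z ∈ Icc x w, (-1) ^ (ρ z - ρ x)) * (c ^ (ρ w - ρ x) * f w) := by
        simp_rw [sum_mul]
        refine sum_comm' fun z w => ?_
        simp only [mem_Icc]
        constructor
        · rintro ⟨⟨hxz, -⟩, hzw, hwy⟩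
          exact ⟨⟨hxz, hzw⟩, hxz.trans hzw, hwy⟩
        · rintro ⟨⟨hxz, hzw⟩, -, hwy⟩
          exact ⟨⟨hxz, hzw.trans hwy⟩, hzw, hwy⟩
    _ = f x := by
        simp only [hE.sum_Icc_neg_one_pow, ite_mul, one_mul, zero_mul]
        simp [hxy]

lemma IsEulerian.sum_Ioc_neg_pow_mul_sum_Icc {R : Type*} [CommRing R] (hE : IsEulerian ρ)
    (hρ : Monotone ρ) (c : R) (f : P → R) {x y : P} (hxy : x ≤ y) :
    ∑ z ∈ Ioc x y, (-c) ^ (ρ z - ρ x) * ∑ w ∈ Icc z y, c ^ (ρ w - ρ z) * f w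
      = -∑ w ∈ Ioc x y, c ^ (ρ w - ρ x) * f w := by
  have h := hE.sum_Icc_neg_pow_mul_sum_Icc hρ c f hxy
  rw [Icc_eq_cons_Ioc hxy, sum_cons, Icc_eq_cons_Ioc hxy, sum_cons] at h
  simp only [Nat.sub_self, pow_zero, one_mul] at h
  linear_combination h

/-- Unitriangular systems have unique solutions. -/
lemma eq_of_sum_Icc_mul_eq {R : Type*} [CommRing R] {c : P → P → R} (hc : ∀ y, c y y = 1)
    {f g : P → R} {x : P} (hx : f x = g x)
    (h : ∀ y, x < y → ∑ z ∈ Icc x y, f z * c z y = ∑ z ∈ Icc x y, g z * c z y) :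
    ∀ y, x ≤ y → f y = g y := by
  intro y
  induction y using WellFoundedLT.induction with
  | ind y ih =>
    intro hxy
    rcases hxy.eq_or_lt with rfl | hlt
    · exact hx
    have hy := h y hlt
    rw [Icc_eq_cons_Ico hxy, sum_cons, sum_cons, hc, mul_one, mul_one,
      sum_congr rfl fun z hz => by rw [ih z (mem_Ico.1 hz).2 (mem_Ico.1 hz).1]] at hy
    exact add_right_cancel hy

end IntervalSums

namespace GHSystem

open Polynomial

variable {P : Type*} [PartialOrder P] [Fintype P] {ρ : P → ℕ} {G H : P → P → ℤ[X]}

lemma natDegree_G_le (hGH : GHSystem ρ G H) {x y : P} (hxy : x ≤ y) :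
    (G x y).natDegree ≤ ρ y - ρ x := by
  rcases hxy.eq_or_lt with rfl | hlt
  · simp [(hGH.1 x).1]
  · rw [hGH.2.2 x y hlt]
    exact natDegree_truncLtHalf_le _ _

variable [LocallyFiniteOrder P]

lemma X_sub_one_mul_H (hGH : GHSystem ρ G H) (hρ : StrictMono ρ) {x y : P} (hxy : x < y) :
    (X - 1) * H x y = ∑ z ∈ Ioc x y, (X - 1) ^ (ρ z - ρ x) * G z y := by
  rw [hGH.2.1 x y hxy, sum_ite_lt_and_le, mul_sum]
  refine sum_congr rfl fun z hz => ?_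
  rw [← mul_assoc, ← pow_succ', Nat.sub_add_cancel (Nat.sub_pos_of_lt (hρ (mem_Ioc.1 hz).1))]

/-- Stanley's symmetry `t^k G(1/t) = G(t) + (t-1) H(t)`, `k = ρ y - ρ x`, for Eulerian posets.
By induction and Möbius inversion, `(1-t) H(t)` is antisymmetric of degree `k`, and `G` is its
lower half. -/
lemma reflect_G (hGH : GHSystem ρ G H) (hρ : StrictMono ρ) (hE : IsEulerian ρ) {x y : P}
    (hxy : x ≤ y) :
    (G x y).reflect (ρ y - ρ x) = ∑ w ∈ Icc x y, (X - 1) ^ (ρ w - ρ x) * G w y := by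
  induction x using WellFoundedGT.induction with
  | ind x ih =>
    rcases hxy.eq_or_lt with rfl | hlt
    · simp [(hGH.1 x).1]
    set S := ∑ z ∈ Ioc x y, (X - 1 : ℤ[X]) ^ (ρ z - ρ x) * G z y
    have hS : S.reflect (ρ y - ρ x) = -S := by
      calc S.reflect (ρ y - ρ x)
          = ∑ z ∈ Ioc x y, (-(X - 1)) ^ (ρ z - ρ x) *
              ∑ w ∈ Icc z y, (X - 1) ^ (ρ w - ρ z) * G w y := by
            rw [reflect_sum]
            refine sum_congr rfl fun z hz => ?_
            obtain ⟨hxz, hzy⟩ := mem_Ioc.1 hz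
            rw [show ρ y - ρ x = (ρ z - ρ x) + (ρ y - ρ z) by
                have := hρ hxz; have := hρ.monotone hzy; omega,
              reflect_mul _ _ (natDegree_X_sub_one_pow_le _) (hGH.natDegree_G_le hzy),
              reflect_X_sub_one_pow, ih z hxz hzy, neg_sub]
        _ = -S := hE.sum_Ioc_neg_pow_mul_sum_Icc hρ.monotone _ _ hlt.le
    have hP : (1 - X) * H x y = -S := by
      rw [← neg_sub, neg_mul, X_sub_one_mul_H hGH hρ hlt]
    have hG : G x y = truncLtHalf (ρ y - ρ x) (-S) := by rw [hGH.2.2 x y hlt, hP]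
    rw [hG, reflect_truncLtHalf (by rw [reflect_neg, hS]), ← hG, Icc_eq_cons_Ioc hxy, sum_cons,
      Nat.sub_self, pow_zero, one_mul, sub_neg_eq_add]

lemma sum_one_sub_X_pow_mul_reflect_G (hGH : GHSystem ρ G H) (hρ : StrictMono ρ)
    (hE : IsEulerian ρ) {x y : P} (hxy : x ≤ y) :
    ∑ z ∈ Icc x y, (1 - X) ^ (ρ z - ρ x) * (G z y).reflect (ρ y - ρ z) = G x y := by
  rw [sum_congr rfl fun z hz => by rw [hGH.reflect_G hρ hE (mem_Icc.1 hz).2, ← neg_sub]]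
  exact hE.sum_Icc_neg_pow_mul_sum_Icc hρ.monotone _ _ hxy

end GHSystem

lemma aeval_UU_VV (b : MvPolynomial (Fin 2) ℤ) :
    MvPolynomial.aeval ![UU, VV] b = algebraMap (MvPolynomial (Fin 2) ℤ) KK b := by
  have h :
      MvPolynomial.aeval ![UU, VV] = IsScalarTower.toAlgHom ℤ (MvPolynomial (Fin 2) ℤ) KK :=
    MvPolynomial.algHom_ext fun i => by fin_cases i <;> simp [UU, VV]
  rw [h, IsScalarTower.coe_toAlgHom']

lemma aeval_UU_VV_injective : Function.Injective (MvPolynomial.aeval (R := ℤ) ![UU, VV]) :=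
  fun a b hab => IsFractionRing.injective (MvPolynomial (Fin 2) ℤ) KK <| by
    rwa [aeval_UU_VV, aeval_UU_VV] at hab

lemma UU_ne_zero : UU ≠ 0 := by
  rw [UU, map_ne_zero_iff _ (IsFractionRing.injective (MvPolynomial (Fin 2) ℤ) KK)]
  exact MvPolynomial.X_ne_zero 0

lemma aeval_rename_swap {R A : Type*} [CommSemiring R] [CommSemiring A] [Algebra R A] (a b : A)
    (q : MvPolynomial (Fin 2) R) :
    MvPolynomial.aeval ![a, b] (MvPolynomial.rename (Equiv.swap 0 1) q)
      = MvPolynomial.aeval ![b, a] q := by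
  have h : ![a, b] ∘ Equiv.swap 0 1 = ![b, a] := by
    funext i
    fin_cases i <;> rfl
  rw [MvPolynomial.aeval_rename, h]

namespace BSystem

open Polynomial

variable {P : Type*} [PartialOrder P] [Fintype P] [LocallyFiniteOrder P]
  {ρ : P → ℕ} {G H : P → P → ℤ[X]} {B : P → P → MvPolynomial (Fin 2) ℤ}

/-- The defining recursion of `B`, cleared of denominators: `u^k G(u⁻¹v)` is the
homogenization of `G` of degree `k`, with the roles of the two variables exchanged. -/
lemma sum_mul_homogenize (hB : BSystem ρ G B) (hGH : GHSystem ρ G H) {x y : P} (hxy : x < y) :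
    ∑ z ∈ Icc x y,
        B x z * MvPolynomial.rename (Equiv.swap 0 1) ((G z y).homogenize (ρ y - ρ z))
      = aeval (MvPolynomial.X 0 * MvPolynomial.X 1) (G x y) := by
  apply aeval_UU_VV_injective
  have hrec := hB.2 x y hxy
  rw [sum_ite_le_and_le] at hrec
  rw [map_sum, ← aeval_algHom_apply]
  convert hrec using 2 with z hz
  · rw [map_mul, aeval_rename_swap, aeval_homogenize (hGH.natDegree_G_le (mem_Icc.1 hz).2) _
      UU_ne_zero]
    simp only [Matrix.cons_val_zero, Matrix.cons_val_one, evB, evP, div_eq_inv_mul]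
    ring
  · simp [evP]

lemma sum_aeval_X_one_mul_reflect (hB : BSystem ρ G B) (hGH : GHSystem ρ G H) {x y : P}
    (hxy : x < y) :
    ∑ z ∈ Icc x y, MvPolynomial.aeval ![X, 1] (B x z) * (G z y).reflect (ρ y - ρ z)
      = G x y := by
  have h := congrArg (MvPolynomial.aeval ![(X : ℤ[X]), 1]) (hB.sum_mul_homogenize hGH hxy)
  rw [map_sum, ← aeval_algHom_apply] at h
  simp only [map_mul, aeval_rename_swap, MvPolynomial.aeval_X, Matrix.cons_val_zero,
    Matrix.cons_val_one, mul_one, aeval_X_left_apply] at h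
  rw [← h]
  refine sum_congr rfl fun z hz => ?_
  rw [aeval_one_X_homogenize (hGH.natDegree_G_le (mem_Icc.1 hz).2)]

lemma sum_aeval_one_X_mul (hB : BSystem ρ G B) (hGH : GHSystem ρ G H) {x y : P}
    (hxy : x < y) :
    ∑ z ∈ Icc x y, MvPolynomial.aeval ![1, X] (B x z) * G z y = G x y := by
  have h := congrArg (MvPolynomial.aeval ![1, (X : ℤ[X])]) (hB.sum_mul_homogenize hGH hxy)
  rw [map_sum, ← aeval_algHom_apply] at h
  simp only [map_mul, aeval_rename_swap, MvPolynomial.aeval_X, Matrix.cons_val_zero,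
    Matrix.cons_val_one, one_mul, aeval_X_left_apply] at h
  rw [← h]
  refine sum_congr rfl fun z hz => ?_
  rw [aeval_homogenize_X_one _ (hGH.natDegree_G_le (mem_Icc.1 hz).2)]

lemma aeval_X_one_eq (hB : BSystem ρ G B) (hGH : GHSystem ρ G H) (hρ : StrictMono ρ)
    (hE : IsEulerian ρ) {x y : P} (hxy : x ≤ y) :
    MvPolynomial.aeval ![(X : ℤ[X]), 1] (B x y) = (1 - X) ^ (ρ y - ρ x) := by
  refine eq_of_sum_Icc_mul_eq (c := fun z y => (G z y).reflect (ρ y - ρ z))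
    (f := fun z => MvPolynomial.aeval ![(X : ℤ[X]), 1] (B x z))
    (g := fun z => (1 - X) ^ (ρ z - ρ x)) (fun y => by simp [(hGH.1 y).1]) (by simp [hB.1])
    (fun y hy => ?_) y hxy
  rw [hB.sum_aeval_X_one_mul_reflect hGH hy, hGH.sum_one_sub_X_pow_mul_reflect_G hρ hE hy.le]

lemma aeval_one_X_eq_zero (hB : BSystem ρ G B) (hGH : GHSystem ρ G H) {x y : P} (hxy : x < y) :
    MvPolynomial.aeval ![1, (X : ℤ[X])] (B x y) = 0 := by
  have h := eq_of_sum_Icc_mul_eq (c := G)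
    (f := fun z => MvPolynomial.aeval ![1, (X : ℤ[X])] (B x z))
    (g := fun z => if x = z then 1 else 0) (fun y => (hGH.1 y).1) (by simp [hB.1])
    (fun y hy => ?_) y hxy.le
  · simpa [hxy.ne] using h
  · simp [hB.sum_aeval_one_X_mul hGH hy, hy.le]

end BSystem

/-- For an Eulerian poset `P` of rank `d > 0`, the polynomial `B(P;u,v)` satisfies
`B(P;u,1) = (1-u)^d` and `B(P;1,v) = 0`. -/
theorem B_specializations {P : Type*} [PartialOrder P] [BoundedOrder P] [Fintype P]
    (ρ : P → ℕ) (d : ℕ) (hrk : IsRankFunction ρ d) (hE : IsEulerian ρ)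
    (G H : P → P → Polynomial ℤ) (hGH : GHSystem ρ G H)
    (B : P → P → MvPolynomial (Fin 2) ℤ) (hB : BSystem ρ G B) (hd : 0 < d) :
    MvPolynomial.aeval ![Polynomial.X, (1 : Polynomial ℤ)] (B ⊥ ⊤)
        = (1 - Polynomial.X) ^ d ∧
    MvPolynomial.aeval ![(1 : Polynomial ℤ), Polynomial.X] (B ⊥ ⊤) = 0 := by
  let _ : LocallyFiniteOrder P := Fintype.toLocallyFiniteOrder
  have hρ := hrk.strictMono
  obtain ⟨hbot, htop, -, -⟩ := hrk
  have hbt : (⊥ : P) < ⊤ := bot_le.lt_of_ne fun h => by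
    rw [← h, hbot] at htop
    omega
  constructor
  · simpa [hbot, htop] using hB.aeval_X_one_eq hGH hρ hE hbt.le
  · exact hB.aeval_one_X_eq_zero hGH hbt
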